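/- arXiv:2106.12592 — 5 statements merged into one kernel-verified Lean document; each statement's English description precedes it below -/
import Mathlib

section
/- For every real η with 0 ≤ η ≤ 1, let M = K₀(Σ(η)⊗Γ(η))K₀ᴴ + K₁(Σ(η)⊗Γ(η))K₁ᴴ. Then the partial trace of M over the second factor equals Σ(η') with η' = η(25 − η²)/24, and the partial trace of M over the first factor equals Γ(η). -/
open Matrix Kronecker

noncomputable def SigmaState (η : ℝ) : Matrix (Fin 2) (Fin 2) ℂ :=
  !![1 / 2, η / 2; η / 2, 1 / 2]

noncomputable def GammaState (η : ℝ) : Matrix (Fin 2) (Fin 2) ℂ :=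
  !![(10 - η ^ 2) / 12, Real.sqrt 3 * η / 4;
     Real.sqrt 3 * η / 4, (2 + η ^ 2) / 12]

/-- Kraus operator `K₀`, with the basis of `ℂ² ⊗ ℂ²` ordered as `|00⟩,|01⟩,|10⟩,|11⟩`. -/
noncomputable def KrausK0 : Matrix (Fin 2 × Fin 2) (Fin 2 × Fin 2) ℂ :=
  Matrix.reindex finProdFinEquiv.symm finProdFinEquiv.symm
    !![1, 0, 0, 0;
       0, 1 / 4, Real.sqrt 3 / 4, 0;
       0, Real.sqrt 3 / 4, 3 / 4, 0;
       0, 0, 0, 1]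

noncomputable def KrausK1 : Matrix (Fin 2 × Fin 2) (Fin 2 × Fin 2) ℂ :=
  Matrix.reindex finProdFinEquiv.symm finProdFinEquiv.symm
    !![0, 0, 0, 0;
       0, 0, 0, 0;
       0, -(Real.sqrt 3) / 2, 1 / 2, 0;
       0, 0, 0, 0]

/-- Partial trace over the second tensor factor. -/
noncomputable def ptrSecond (M : Matrix (Fin 2 × Fin 2) (Fin 2 × Fin 2) ℂ) :
    Matrix (Fin 2) (Fin 2) ℂ :=
  Matrix.of fun a b => ∑ c : Fin 2, M (a, c) (b, c)

/-- Partial trace over the first tensor factor. -/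
noncomputable def ptrFirst (M : Matrix (Fin 2 × Fin 2) (Fin 2 × Fin 2) ℂ) :
    Matrix (Fin 2) (Fin 2) ℂ :=
  Matrix.of fun a b => ∑ c : Fin 2, M (c, a) (c, b)

/-! Both Kraus operators act nontrivially only on span{|01⟩, |10⟩}, and `K₁` is the rank-one map `|10⟩⟨v|`
with `v = (-√3/2)|01⟩ + (1/2)|10⟩`, so each marginal of the channel output is an explicit linear
combination of the entries of the input state. Substituting the entries of `Σ(η) ⊗ Γ(η)` leaves
polynomial identities in `η` and `√3` that hold once `√3² = 3` is used. -/

lemma ofReal_sqrt_three_sq : ((Real.sqrt 3 : ℝ) : ℂ) ^ 2 = 3 := by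
  norm_cast
  exact Real.sq_sqrt (by norm_num)

noncomputable def amplificationChannel (ρ : Matrix (Fin 2 × Fin 2) (Fin 2 × Fin 2) ℂ) :
    Matrix (Fin 2 × Fin 2) (Fin 2 × Fin 2) ℂ :=
  KrausK0 * ρ * KrausK0ᴴ + KrausK1 * ρ * KrausK1ᴴ

lemma ptrSecond_amplificationChannel (ρ : Matrix (Fin 2 × Fin 2) (Fin 2 × Fin 2) ℂ) :
    ptrSecond (amplificationChannel ρ) =
      (!![ρ (0, 0) (0, 0) + ρ (0, 1) (0, 1) / 16
            + Real.sqrt 3 * (ρ (0, 1) (1, 0) + ρ (1, 0) (0, 1)) / 16 + 3 * ρ (1, 0) (1, 0) / 16,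
          Real.sqrt 3 * ρ (0, 0) (0, 1) / 4 + 3 * ρ (0, 0) (1, 0) / 4
            + ρ (0, 1) (1, 1) / 4 + Real.sqrt 3 * ρ (1, 0) (1, 1) / 4;
         Real.sqrt 3 * ρ (0, 1) (0, 0) / 4 + 3 * ρ (1, 0) (0, 0) / 4
            + ρ (1, 1) (0, 1) / 4 + Real.sqrt 3 * ρ (1, 1) (1, 0) / 4,
          15 * ρ (0, 1) (0, 1) / 16 - Real.sqrt 3 * (ρ (0, 1) (1, 0) + ρ (1, 0) (0, 1)) / 16
            + 13 * ρ (1, 0) (1, 0) / 16 + ρ (1, 1) (1, 1)] : Matrix (Fin 2) (Fin 2) ℂ) := by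
  ext a b
  fin_cases a <;> fin_cases b <;>
    simp [ptrSecond, amplificationChannel, KrausK0, KrausK1, mul_apply,
      Fintype.sum_prod_type, finProdFinEquiv, map_ofNat, map_inv₀, Complex.conj_ofReal] <;>
    ring_nf <;> simp only [ofReal_sqrt_three_sq] <;> ring

lemma ptrFirst_amplificationChannel (ρ : Matrix (Fin 2 × Fin 2) (Fin 2 × Fin 2) ℂ) :
    ptrFirst (amplificationChannel ρ) =
      (!![ρ (0, 0) (0, 0) + 15 * ρ (0, 1) (0, 1) / 16
            - Real.sqrt 3 * (ρ (0, 1) (1, 0) + ρ (1, 0) (0, 1)) / 16 + 13 * ρ (1, 0) (1, 0) / 16,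
          ρ (0, 0) (0, 1) / 4 + Real.sqrt 3 * ρ (0, 0) (1, 0) / 4
            + Real.sqrt 3 * ρ (0, 1) (1, 1) / 4 + 3 * ρ (1, 0) (1, 1) / 4;
         ρ (0, 1) (0, 0) / 4 + Real.sqrt 3 * ρ (1, 0) (0, 0) / 4
            + Real.sqrt 3 * ρ (1, 1) (0, 1) / 4 + 3 * ρ (1, 1) (1, 0) / 4,
          ρ (0, 1) (0, 1) / 16 + Real.sqrt 3 * (ρ (0, 1) (1, 0) + ρ (1, 0) (0, 1)) / 16
            + 3 * ρ (1, 0) (1, 0) / 16 + ρ (1, 1) (1, 1)] : Matrix (Fin 2) (Fin 2) ℂ) := by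
  ext a b
  fin_cases a <;> fin_cases b <;>
    simp [ptrFirst, amplificationChannel, KrausK0, KrausK1, mul_apply,
      Fintype.sum_prod_type, finProdFinEquiv, map_ofNat, map_inv₀, Complex.conj_ofReal] <;>
    ring_nf <;> simp only [ofReal_sqrt_three_sq] <;> ring

theorem amplification_channel_marginals_general (η : ℝ) :
    ptrSecond (KrausK0 * (SigmaState η ⊗ₖ GammaState η) * KrausK0ᴴ
          + KrausK1 * (SigmaState η ⊗ₖ GammaState η) * KrausK1ᴴ)
        = SigmaState (η * (25 - η ^ 2) / 24) ∧
    ptrFirst (KrausK0 * (SigmaState η ⊗ₖ GammaState η) * KrausK0ᴴ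
          + KrausK1 * (SigmaState η ⊗ₖ GammaState η) * KrausK1ᴴ)
        = GammaState η := by
  change ptrSecond (amplificationChannel _) = _ ∧ ptrFirst (amplificationChannel _) = _
  rw [ptrSecond_amplificationChannel, ptrFirst_amplificationChannel]
  constructor <;> ext a b <;> fin_cases a <;> fin_cases b <;>
    simp [SigmaState, GammaState] <;> ring_nf <;> simp only [ofReal_sqrt_three_sq] <;> ring

theorem amplification_channel_marginals (η : ℝ) (h0 : 0 ≤ η) (h1 : η ≤ 1) :
    ptrSecond (KrausK0 * (SigmaState η ⊗ₖ GammaState η) * KrausK0ᴴ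
          + KrausK1 * (SigmaState η ⊗ₖ GammaState η) * KrausK1ᴴ)
        = SigmaState (η * (25 - η ^ 2) / 24) ∧
    ptrFirst (KrausK0 * (SigmaState η ⊗ₖ GammaState η) * KrausK0ᴴ
          + KrausK1 * (SigmaState η ⊗ₖ GammaState η) * KrausK1ᴴ)
        = GammaState η :=
  amplification_channel_marginals_general η
end

section
/- For every natural number m ≥ 1, setting L = 2m, the following inequality holds: (1/2^L) · Σ_{n=0}^{L−1} √( C(L,n) · C(L,n+1) ) ≥ 1 − C(L, m)/2^L, where C(L,n) denotes the binomial coefficient L choose n and the square roots are of real numbers. -/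
/-!
Binomial coefficients of `L = 2m` increase up to the middle and decrease after it, so
`min (C(L,n), C(L,n+1))` is `C(L,n)` for `n < m` and `C(L,n+1)` for `n ≥ m`. Summing these
minima therefore counts every `C(L,k)` except the central one, giving `2^L - C(L,m)`,
and each minimum is at most the geometric mean `√(C(L,n) C(L,n+1))`.
-/

open Finset

namespace Nat

theorem choose_succ_le_of_le_two_mul {n r : ℕ} (h : n ≤ 2 * r) :
    n.choose (r + 1) ≤ n.choose r := by
  rcases Nat.lt_or_ge n (r + 1) with hn | hn
  · simp [Nat.choose_eq_zero_of_lt hn]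
  · rw [← Nat.choose_symm hn, ← Nat.choose_symm (by omega : r ≤ n),
      show n - r = n - (r + 1) + 1 by omega]
    exact Nat.choose_le_succ_of_lt_half_left (by omega)

theorem min_choose_two_mul_of_lt {m n : ℕ} (h : n < m) :
    min ((2 * m).choose n) ((2 * m).choose (n + 1)) = (2 * m).choose n :=
  min_eq_left (Nat.choose_le_succ_of_lt_half_left (by omega))

theorem min_choose_two_mul_of_le {m n : ℕ} (h : m ≤ n) :
    min ((2 * m).choose n) ((2 * m).choose (n + 1)) = (2 * m).choose (n + 1) :=
  min_eq_right (Nat.choose_succ_le_of_le_two_mul (by omega))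

theorem sum_range_min_choose_add_central (m : ℕ) :
    ∑ n ∈ range (2 * m), min ((2 * m).choose n) ((2 * m).choose (n + 1))
      + (2 * m).choose m = 2 ^ (2 * m) := by
  have hlow : ∀ n ∈ range m, min ((2 * m).choose n) ((2 * m).choose (n + 1))
      = (2 * m).choose n := fun n hn => min_choose_two_mul_of_lt (mem_range.mp hn)
  have hhigh : ∀ n ∈ range m, min ((2 * m).choose (m + n)) ((2 * m).choose (m + n + 1))
      = (2 * m).choose (m + n + 1) := fun n _ => min_choose_two_mul_of_le (by omega)
  -- Split both `range (2m)` and `range (2m + 1)` at `m`; the upper halves agree after the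
  -- central term `C(2m, m)` is peeled off the second.
  rw [← Nat.sum_range_choose, show 2 * m + 1 = m + (m + 1) by omega, sum_range_add,
    sum_range_succ', show range (2 * m) = range (m + m) by rw [two_mul], sum_range_add,
    sum_congr rfl hlow, sum_congr rfl hhigh]
  simp only [add_assoc, add_zero]

end Nat

theorem Real.min_le_sqrt_mul {a b : ℝ} (ha : 0 ≤ a) (hb : 0 ≤ b) : min a b ≤ √(a * b) :=
  Real.le_sqrt_of_sq_le <| by
    rw [sq]
    exact mul_le_mul (min_le_left a b) (min_le_right a b) (le_min ha hb) ha

theorem overlap_bound_even_general (m : ℕ) :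
    (1 : ℝ) / 2 ^ (2 * m) *
        ∑ n ∈ Finset.range (2 * m),
          Real.sqrt ((((2 * m).choose n : ℝ)) * (((2 * m).choose (n + 1) : ℝ)))
      ≥ 1 - ((2 * m).choose m : ℝ) / 2 ^ (2 * m) := by
  have hmin : ∑ n ∈ range (2 * m), min ((2 * m).choose n : ℝ) ((2 * m).choose (n + 1))
      + (2 * m).choose m = 2 ^ (2 * m) := by
    exact_mod_cast Nat.sum_range_min_choose_add_central m
  have hsqrt : ∑ n ∈ range (2 * m), min ((2 * m).choose n : ℝ) ((2 * m).choose (n + 1))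
      ≤ ∑ n ∈ range (2 * m), √(((2 * m).choose n : ℝ) * (2 * m).choose (n + 1)) :=
    sum_le_sum fun n _ => Real.min_le_sqrt_mul (Nat.cast_nonneg _) (Nat.cast_nonneg _)
  rw [ge_iff_le, one_sub_div (by positivity), one_div, inv_mul_eq_div]
  gcongr
  linarith

theorem overlap_bound_even (m : ℕ) (hm : 1 ≤ m) :
    (1 : ℝ) / 2 ^ (2 * m) *
        ∑ n ∈ Finset.range (2 * m),
          Real.sqrt ((((2 * m).choose n : ℝ)) * (((2 * m).choose (n + 1) : ℝ)))
      ≥ 1 - ((2 * m).choose m : ℝ) / 2 ^ (2 * m) :=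
  overlap_bound_even_general m
end

section
/- For every natural number m ≥ 0, setting L = 2m+1, the following inequality holds: (1/2^L) · Σ_{n=0}^{L−1} √( C(L,n) · C(L,n+1) ) ≥ 1 − C(L, m+1)/2^L, where C(L,n) denotes the binomial coefficient L choose n and the square roots are of real numbers. -/
/-!
Each term `√(C(L,n) C(L,n+1))` is at least `min (C(L,n)) (C(L,n+1))`. The binomial coefficients
of `L = 2m+1` increase up to `k = m` and decrease from `k = m+1` on, so this minimum is `C(L,n)`
for `n ≤ m` and `C(L,n+1)` for `n > m`: every `C(L,k)` except `C(L,m+1)` occurs exactly once,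
and the minima add up to `2^L - C(L,m+1)`.
-/

open Finset

namespace Nat

-- Both follow from `C(n,k+1) * (k+1) = C(n,k) * (n-k)`.
theorem choose_le_choose_succ_of_two_mul_lt {n k : ℕ} (h : 2 * k < n) :
    n.choose k ≤ n.choose (k + 1) := by
  refine Nat.le_of_mul_le_mul_right ?_ (Nat.succ_pos k)
  rw [choose_succ_right_eq]
  exact Nat.mul_le_mul_left _ (by omega)

theorem choose_succ_le_choose_of_le_two_mul_add_one {n k : ℕ} (h : n ≤ 2 * k + 1) :
    n.choose (k + 1) ≤ n.choose k := by
  refine Nat.le_of_mul_le_mul_right ?_ (Nat.succ_pos k)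
  rw [choose_succ_right_eq]
  exact Nat.mul_le_mul_left _ (by omega)

theorem sum_range_min_choose_succ_add_choose_succ_half (m : ℕ) :
    ∑ k ∈ range (2 * m + 1), min ((2 * m + 1).choose k) ((2 * m + 1).choose (k + 1))
      + (2 * m + 1).choose (m + 1) = 2 ^ (2 * m + 1) := by
  have hmin := sum_range_add
    (fun k => min ((2 * m + 1).choose k) ((2 * m + 1).choose (k + 1))) (m + 1) m
  have hall := sum_range_add (fun k => (2 * m + 1).choose k) (m + 2) m
  rw [show m + 1 + m = 2 * m + 1 by omega] at hmin
  rw [show m + 2 + m = 2 * m + 1 + 1 by omega, sum_range_choose, sum_range_succ] at hall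
  have hlow : ∑ k ∈ range (m + 1), min ((2 * m + 1).choose k) ((2 * m + 1).choose (k + 1))
      = ∑ k ∈ range (m + 1), (2 * m + 1).choose k :=
    sum_congr rfl fun k hk =>
      min_eq_left (choose_le_choose_succ_of_two_mul_lt (by have := mem_range.mp hk; omega))
  have hhigh : ∑ i ∈ range m,
        min ((2 * m + 1).choose (m + 1 + i)) ((2 * m + 1).choose (m + 1 + i + 1))
      = ∑ i ∈ range m, (2 * m + 1).choose (m + 2 + i) :=
    sum_congr rfl fun i _ => by
      rw [min_eq_right (choose_succ_le_choose_of_le_two_mul_add_one (by omega)), add_right_comm]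
  rw [hmin, hlow, hhigh, hall]
  ring

end Nat

theorem overlap_bound_odd (m : ℕ) :
    (1 : ℝ) / 2 ^ (2 * m + 1) *
        ∑ n ∈ Finset.range (2 * m + 1),
          Real.sqrt ((((2 * m + 1).choose n : ℝ)) * (((2 * m + 1).choose (n + 1) : ℝ)))
      ≥ 1 - ((2 * m + 1).choose (m + 1) : ℝ) / 2 ^ (2 * m + 1) := by
  have hminima : ∑ n ∈ range (2 * m + 1),
        min ((2 * m + 1).choose n : ℝ) ((2 * m + 1).choose (n + 1) : ℝ)
      = 2 ^ (2 * m + 1) - ((2 * m + 1).choose (m + 1) : ℝ) := by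
    rw [eq_sub_iff_add_eq]
    exact_mod_cast Nat.sum_range_min_choose_succ_add_choose_succ_half m
  have hsqrt : ∑ n ∈ range (2 * m + 1),
        min ((2 * m + 1).choose n : ℝ) ((2 * m + 1).choose (n + 1) : ℝ)
      ≤ ∑ n ∈ range (2 * m + 1),
          √(((2 * m + 1).choose n : ℝ) * ((2 * m + 1).choose (n + 1) : ℝ)) :=
    sum_le_sum fun n _ => Real.min_le_sqrt_mul (Nat.cast_nonneg _) (Nat.cast_nonneg _)
  calc 1 - ((2 * m + 1).choose (m + 1) : ℝ) / 2 ^ (2 * m + 1)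
      = 1 / 2 ^ (2 * m + 1) * (2 ^ (2 * m + 1) - ((2 * m + 1).choose (m + 1) : ℝ)) := by
        field_simp
    _ ≤ _ := by
        rw [← hminima]
        gcongr
end

section
/- For all natural numbers m and L with m ≤ L, the following inequality holds: (1/2^L) · Σ_{n=0}^{L−m} √( C(L,n) · C(L,n+m) ) ≥ 1 − m · C(L, ⌊L/2⌋)/2^L, where C(L,n) is the binomial coefficient and the square roots are of real numbers. -/
/-!
Since `√(ab) ≥ min a b`, it suffices to bound `∑ₙ min (C(L,n), C(L,n+m))` from below. By unimodality
and symmetry of the binomial row, this minimum is `C(L,n)` up to the middle `n ≤ (L-m)/2` and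
`C(L,n+m)` afterwards, so the sum of minima is the whole row `2^L` with a block of `m` consecutive
entries removed, each of them at most the central coefficient `C(L,⌊L/2⌋)`.
-/

open Finset

namespace Nat

theorem monotoneOn_choose_Iic_half (L : ℕ) : MonotoneOn L.choose (Set.Iic (L / 2)) :=
  monotoneOn_of_le_add_one Set.ordConnected_Iic fun _ _ _ ha =>
    choose_le_succ_of_lt_half_left (Set.mem_Iic.mp ha)

theorem choose_le_choose_of_le_of_add_le {L a b : ℕ} (hab : a ≤ b) (h : a + b ≤ L) :
    L.choose a ≤ L.choose b := by
  have ha : a ∈ Set.Iic (L / 2) := Set.mem_Iic.mpr (by omega)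
  rcases le_or_gt b (L / 2) with hb | hb
  · exact monotoneOn_choose_Iic_half L ha (Set.mem_Iic.mpr hb) hab
  · rw [← choose_symm (by omega : b ≤ L)]
    exact monotoneOn_choose_Iic_half L ha (Set.mem_Iic.mpr (by omega)) (by omega)

theorem choose_le_choose_of_le_of_le_add {L a b : ℕ} (hab : a ≤ b) (hb : b ≤ L) (h : L ≤ a + b) :
    L.choose b ≤ L.choose a := by
  rw [← choose_symm hb, ← choose_symm (hab.trans hb)]
  exact choose_le_choose_of_le_of_add_le (by omega) (by omega)

end Nat

theorem Real.le_sqrt_mul_of_le {a b : ℝ} (ha : 0 ≤ a) (hab : a ≤ b) : a ≤ √(a * b) :=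
  Real.le_sqrt_of_sq_le (by nlinarith)

namespace Finset

theorem sum_range_add_sum_Ico_add_sum_Ico_shift {M : Type*} [AddCommMonoid M] (f : ℕ → M)
    {t k : ℕ} (m : ℕ) (ht : t ≤ k + 1) :
    ∑ n ∈ range t, f n + ∑ j ∈ Ico t (t + m), f j + ∑ n ∈ Ico t (k + 1), f (n + m) =
      ∑ j ∈ range (k + m + 1), f j := by
  rw [sum_Ico_add', sum_range_add_sum_Ico _ (by omega), sum_range_add_sum_Ico _ (by omega),
    add_right_comm k]

end Finset

theorem overlap_bound_shift (m L : ℕ) (hmL : m ≤ L) :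
    (1 : ℝ) / 2 ^ L *
        ∑ n ∈ Finset.range (L - m + 1),
          Real.sqrt (((L.choose n : ℝ)) * ((L.choose (n + m) : ℝ)))
      ≥ 1 - (m : ℝ) * (L.choose (L / 2) : ℝ) / 2 ^ L := by
  set t := (L - m) / 2 + 1
  have hrow : ∑ j ∈ range (L - m + m + 1), (L.choose j : ℝ) = 2 ^ L := by
    rw [Nat.sub_add_cancel hmL]; exact_mod_cast Nat.sum_range_choose L
  have hlow : ∑ n ∈ range t, (L.choose n : ℝ) ≤
      ∑ n ∈ range t, √(L.choose n * L.choose (n + m)) := by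
    refine sum_le_sum fun n hn => Real.le_sqrt_mul_of_le (Nat.cast_nonneg _) (Nat.cast_le.mpr ?_)
    have := mem_range.mp hn
    exact Nat.choose_le_choose_of_le_of_add_le (by omega) (by omega)
  have hhigh : ∑ n ∈ Ico t (L - m + 1), (L.choose (n + m) : ℝ) ≤
      ∑ n ∈ Ico t (L - m + 1), √(L.choose n * L.choose (n + m)) := by
    refine sum_le_sum fun n hn => mul_comm (L.choose n : ℝ) _ ▸
      Real.le_sqrt_mul_of_le (Nat.cast_nonneg _) (Nat.cast_le.mpr ?_)
    have := mem_Ico.mp hn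
    exact Nat.choose_le_choose_of_le_of_le_add (by omega) (by omega) (by omega)
  have hmid : ∑ j ∈ Ico t (t + m), (L.choose j : ℝ) ≤ m * L.choose (L / 2) := by
    refine (sum_le_card_nsmul _ _ (L.choose (L / 2) : ℝ) fun j _ => ?_).trans_eq (by simp)
    exact Nat.cast_le.mpr (Nat.choose_le_middle j L)
  have hsplit := sum_range_add_sum_Ico_add_sum_Ico_shift (fun j => (L.choose j : ℝ)) m
    (by omega : t ≤ L - m + 1)
  rw [← sum_range_add_sum_Ico _ (by omega : t ≤ L - m + 1), ge_iff_le, one_div_mul_eq_div,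
    sub_le_iff_le_add, ← add_div, le_div_iff₀ (by positivity), one_mul]
  linarith
end

section
/- For every fixed natural number m, the sequence b_L := (1/2^L) · Σ_{n=0}^{L−m} √( C(L,n) · C(L,n+m) ), indexed by natural numbers L ≥ m, converges to 1 as L → ∞, where C(L,n) is the binomial coefficient and the square roots are of real numbers. -/
/-!
Cauchy–Schwarz gives `b_L ≤ 1`. For the lower bound, `√(xy) ≥ min x y ≥ x - |x - y|`, and
`|C(L,n) - C(L,n+m)|` is at most the variation of the row `C(L,·)` over `[n, n + m]`. The row is
unimodal, so its total variation is at most twice the central coefficient, and summing the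
windows gives `b_L ≥ 1 - 3m · C(L, L/2) / 2^L`. Finally `C(L, L/2)² (L + 1) ≤ 4^L`, so the
central coefficient is `o(2^L)`.
-/

open Finset Filter Topology

namespace Nat

theorem choose_succ_le_of_half_le {n r : ℕ} (h : n / 2 ≤ r) :
    n.choose (r + 1) ≤ n.choose r := by
  refine Nat.le_of_mul_le_mul_right ?_ r.succ_pos
  rw [choose_succ_right_eq]
  exact Nat.mul_le_mul_left _ (by omega)

theorem centralBinom_sq_mul_le (n : ℕ) : centralBinom n ^ 2 * (2 * n + 1) ≤ 16 ^ n := by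
  induction n with
  | zero => simp
  | succ n ih =>
    refine Nat.le_of_mul_le_mul_right (c := (n + 1) ^ 2) ?_ (by positivity)
    calc centralBinom (n + 1) ^ 2 * (2 * (n + 1) + 1) * (n + 1) ^ 2
        = ((n + 1) * centralBinom (n + 1)) ^ 2 * (2 * n + 3) := by ring
      _ = 4 * ((2 * n + 1) * (2 * n + 3)) * (centralBinom n ^ 2 * (2 * n + 1)) := by
          rw [succ_mul_centralBinom_succ]; ring
      _ ≤ 4 * ((2 * n + 2) * (2 * n + 2)) * 16 ^ n := by gcongr 4 * ?_ * ?_; nlinarith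
      _ = 16 ^ (n + 1) * (n + 1) ^ 2 := by ring

theorem choose_half_sq_mul_le (L : ℕ) : L.choose (L / 2) ^ 2 * (L + 1) ≤ 4 ^ L := by
  obtain ⟨k, rfl | rfl⟩ := L.even_or_odd'
  · have := centralBinom_sq_mul_le k
    rw [centralBinom_eq_two_mul_choose] at this
    rwa [Nat.mul_div_cancel_left k two_pos, pow_mul]
  · have hpascal : centralBinom (k + 1) = 2 * (2 * k + 1).choose k := by
      rw [centralBinom_eq_two_mul_choose, mul_add_one, choose_succ_succ, choose_symm_half]; ring
    have := centralBinom_sq_mul_le (k + 1)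
    have h16 : 16 ^ (k + 1) = 4 * 4 ^ (2 * k + 1) := by rw [pow_succ, pow_succ, pow_mul]; ring
    rw [hpascal, h16] at this
    rw [show (2 * k + 1) / 2 = k by omega]
    nlinarith

end Nat

theorem choose_half_div_two_pow_le (L : ℕ) :
    (L.choose (L / 2) : ℝ) / 2 ^ L ≤ √(1 / (L + 1)) := by
  refine Real.le_sqrt_of_sq_le ?_
  rw [div_pow, div_le_div_iff₀ (by positivity) (by positivity), ← pow_mul, pow_mul']
  exact_mod_cast (Nat.choose_half_sq_mul_le L).trans_eq (one_mul _).symm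

theorem tendsto_choose_half_div_two_pow :
    Tendsto (fun L : ℕ => (L.choose (L / 2) : ℝ) / 2 ^ L) atTop (𝓝 0) := by
  have hsqrt : Tendsto (fun L : ℕ => √(1 / ((L : ℝ) + 1))) atTop (𝓝 0) := by
    simpa using tendsto_one_div_add_atTop_nhds_zero_nat.sqrt
  exact squeeze_zero (fun L => by positivity) choose_half_div_two_pow_le hsqrt

theorem sub_dist_le_sqrt_mul {x y : ℝ} (hx : 0 ≤ x) (hy : 0 ≤ y) :
    x - dist x y ≤ √(x * y) := by
  have hmin : min x y ≤ √(x * y) := Real.le_sqrt_of_sq_le <| by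
    rw [sq]; exact mul_le_mul (min_le_left _ _) (min_le_right _ _) (le_min hx hy) hx
  rw [Real.dist_eq, abs_sub_comm, ← max_sub_min_eq_abs]
  linarith [le_max_left x y]

theorem sum_range_dist_succ_of_unimodal {a : ℕ → ℝ} {c : ℕ}
    (hup : ∀ j < c, a j ≤ a (j + 1))
    (hdown : ∀ j, c ≤ j → a (j + 1) ≤ a j) (N : ℕ) :
    ∑ j ∈ range N, dist (a j) (a (j + 1)) = 2 * a (min N c) - a N - a 0 := by
  induction N with
  | zero => rw [range_zero, sum_empty, Nat.zero_min]; ring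
  | succ N ih =>
    rw [sum_range_succ, ih, Real.dist_eq]
    rcases lt_or_ge N c with hN | hN
    · rw [min_eq_left hN.le, min_eq_left hN, abs_of_nonpos (by linarith [hup N hN])]
      ring
    · rw [min_eq_right hN, min_eq_right (by omega),
        abs_of_nonneg (by linarith [hdown N hN])]
      ring

theorem sum_range_dist_succ_le_of_unimodal {a : ℕ → ℝ} {c : ℕ} {M : ℝ} (h0 : ∀ j, 0 ≤ a j)
    (hM : ∀ j, a j ≤ M) (hup : ∀ j < c, a j ≤ a (j + 1))
    (hdown : ∀ j, c ≤ j → a (j + 1) ≤ a j) (N : ℕ) :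
    ∑ j ∈ range N, dist (a j) (a (j + 1)) ≤ 2 * M := by
  rw [sum_range_dist_succ_of_unimodal hup hdown]
  linarith [hM (min N c), h0 N, h0 0]

theorem sum_range_shift_le {d : ℕ → ℝ} (hd : ∀ j, 0 ≤ d j) (k K : ℕ) :
    ∑ n ∈ range K, d (k + n) ≤ ∑ j ∈ range (k + K), d j := by
  rw [sum_range_add]
  exact le_add_of_nonneg_left (sum_nonneg fun j _ => hd j)

/-- Each overlap `√(a n a (n + m))` loses at most the variation of `a` over `[n, n + m]`, and
every step of `a` lies in at most `m` of these windows. -/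
theorem sum_sub_mul_le_sum_sqrt_mul_shift {a : ℕ → ℝ} {V : ℝ} (ha : ∀ n, 0 ≤ a n)
    (hV : ∀ N, ∑ j ∈ range N, dist (a j) (a (j + 1)) ≤ V) (m K : ℕ) :
    ∑ n ∈ range K, a n - m * V ≤ ∑ n ∈ range K, √(a n * a (n + m)) := by
  set d : ℕ → ℝ := fun j => dist (a j) (a (j + 1))
  have hwindow : ∀ n, a n - ∑ k ∈ range m, d (n + k) ≤ √(a n * a (n + m)) := fun n =>
    calc a n - ∑ k ∈ range m, d (n + k) ≤ a n - dist (a n) (a (n + m)) :=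
          sub_le_sub_left (dist_le_range_sum_dist (fun k => a (n + k)) m) _
      _ ≤ √(a n * a (n + m)) := sub_dist_le_sqrt_mul (ha n) (ha (n + m))
  have hsteps : ∑ n ∈ range K, ∑ k ∈ range m, d (n + k) ≤ m * V := by
    rw [sum_comm]
    refine (sum_le_card_nsmul _ _ V fun k _ => ?_).trans_eq (by simp)
    simpa only [add_comm] using (sum_range_shift_le (fun j => dist_nonneg) k K).trans (hV _)
  calc ∑ n ∈ range K, a n - m * V
      ≤ ∑ n ∈ range K, (a n - ∑ k ∈ range m, d (n + k)) := by
        rw [sum_sub_distrib]; linarith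
    _ ≤ ∑ n ∈ range K, √(a n * a (n + m)) := sum_le_sum fun n _ => hwindow n

theorem sum_range_choose_real (L : ℕ) : ∑ j ∈ range (L + 1), (L.choose j : ℝ) = 2 ^ L := by
  exact_mod_cast L.sum_range_choose

theorem sum_choose_le_two_pow (L : ℕ) (s : Finset ℕ) :
    ∑ j ∈ s, (L.choose j : ℝ) ≤ 2 ^ L := by
  calc ∑ j ∈ s, (L.choose j : ℝ)
      ≤ ∑ j ∈ s ∪ range (L + 1), (L.choose j : ℝ) :=
        sum_le_sum_of_subset_of_nonneg subset_union_left fun _ _ _ => by positivity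
    _ = 2 ^ L := by
        rw [← sum_range_choose_real, eq_comm]
        refine sum_subset subset_union_right fun j _ hj => ?_
        rw [Nat.choose_eq_zero_of_lt (by simpa using hj), Nat.cast_zero]

/-- The overlap `b_L = Tr[Δ(m) |+⟩⟨+|^{⊗L}]`: the Bhattacharyya coefficient between the
binomial distribution `Bin(L, 1/2)` and its shift by `m`. -/
noncomputable def binomialShiftOverlap (m L : ℕ) : ℝ :=
  1 / 2 ^ L * ∑ n ∈ range (L - m + 1), √((L.choose n : ℝ) * (L.choose (n + m) : ℝ))

theorem binomialShiftOverlap_le_one (m L : ℕ) : binomialShiftOverlap m L ≤ 1 := by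
  rw [binomialShiftOverlap, one_div_mul_eq_div, div_le_one (by positivity)]
  calc ∑ n ∈ range (L - m + 1), √((L.choose n : ℝ) * (L.choose (n + m) : ℝ))
      = ∑ n ∈ range (L - m + 1), √(L.choose n : ℝ) * √(L.choose (n + m) : ℝ) :=
        sum_congr rfl fun n _ => Real.sqrt_mul (Nat.cast_nonneg _) _
    _ ≤ √(∑ n ∈ range (L - m + 1), (L.choose n : ℝ)) *
          √(∑ n ∈ range (L - m + 1), (L.choose (n + m) : ℝ)) :=
        Real.sum_sqrt_mul_sqrt_le _ (fun _ => Nat.cast_nonneg _) fun _ => Nat.cast_nonneg _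
    _ ≤ √(2 ^ L) * √(2 ^ L) := by
        gcongr
        · exact sum_choose_le_two_pow L _
        · simpa using sum_choose_le_two_pow L ((range (L - m + 1)).map (addRightEmbedding m))
    _ = 2 ^ L := Real.mul_self_sqrt (by positivity)

theorem one_sub_le_binomialShiftOverlap (m L : ℕ) :
    1 - 3 * m * ((L.choose (L / 2) : ℝ) / 2 ^ L) ≤ binomialShiftOverlap m L := by
  set M : ℝ := ↑(L.choose (L / 2)) with hM
  have hmiddle : ∀ j, (L.choose j : ℝ) ≤ M := fun j => by
    rw [hM]; exact_mod_cast Nat.choose_le_middle j L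
  have hvariation :
      ∀ N, ∑ j ∈ range N, dist (L.choose j : ℝ) (L.choose (j + 1)) ≤ 2 * M :=
    sum_range_dist_succ_le_of_unimodal (fun _ => Nat.cast_nonneg _) hmiddle
      (fun _ hj => by exact_mod_cast Nat.choose_le_succ_of_lt_half_left hj)
      (fun _ hj => by exact_mod_cast Nat.choose_succ_le_of_half_le hj)
  have hmass : 2 ^ L - m * M ≤ ∑ n ∈ range (L - m + 1), (L.choose n : ℝ) := by
    have htail : ∑ j ∈ Ico (L - m + 1) (L + 1), (L.choose j : ℝ) ≤ m * M := by
      refine (sum_le_card_nsmul _ _ M fun j _ => hmiddle j).trans ?_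
      rw [Nat.card_Ico, nsmul_eq_mul]
      gcongr
      omega
    rw [← sum_range_choose_real, ← sum_range_add_sum_Ico _ (by omega : L - m + 1 ≤ L + 1)]
    linarith
  have hoverlap :=
    sum_sub_mul_le_sum_sqrt_mul_shift (fun _ => Nat.cast_nonneg _) hvariation m (L - m + 1)
  rw [binomialShiftOverlap, one_div_mul_eq_div, le_div_iff₀ (by positivity)]
  calc (1 - 3 * m * (M / 2 ^ L)) * 2 ^ L = 2 ^ L - m * M - m * (2 * M) := by
        field_simp; ring
    _ ≤ _ := by linarith

theorem overlap_shift_tendsto_one (m : ℕ) :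
    Filter.Tendsto
      (fun L : ℕ => (1 : ℝ) / 2 ^ L *
        ∑ n ∈ Finset.range (L - m + 1),
          Real.sqrt (((L.choose n : ℝ)) * ((L.choose (n + m) : ℝ))))
      Filter.atTop (nhds 1) := by
  have hlower :
      Tendsto (fun L : ℕ => 1 - 3 * m * ((L.choose (L / 2) : ℝ) / 2 ^ L)) atTop (𝓝 1) := by
    simpa using (tendsto_choose_half_div_two_pow.const_mul (3 * (m : ℝ))).const_sub 1
  exact tendsto_of_tendsto_of_tendsto_of_le_of_le hlower tendsto_const_nhds
    (one_sub_le_binomialShiftOverlap m) (binomialShiftOverlap_le_one m)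
end
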